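/- For every d ≥ 1 and every k ≥ 1, there exists a set of k pairwise 2-separated closed balls in the closed unit ball D^d ⊂ ℝ^d, each of radius (16√d)^{-1} · k^{-1/d}. -/

import Mathlib

open Metric

private lemma one_le_abs_sub_of_ne {a b : ℕ} (h : a ≠ b) : (1 : ℝ) ≤ |(a : ℝ) - b| := by
  have h0 : (a : ℤ) - b ≠ 0 := by omega
  have h1 : (1 : ℤ) ≤ |(a : ℤ) - b| := Int.one_le_abs h0
  have h2 : ((1 : ℤ) : ℝ) ≤ |(((a : ℤ) - b : ℤ) : ℝ)| := by
    rw [← Int.cast_abs]; exact_mod_cast h1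
  push_cast at h2
  exact h2

/-- For every `d ≥ 1` and `k ≥ 1` there exist `k` closed balls of radius
`(16√d)⁻¹ · k^{-1/d}` that are 2-separated in the closed unit ball `D^d ⊆ ℝ^d`:
the concentric balls of twice the radius are contained in the unit ball and pairwise disjoint. -/
theorem two_separated_balls_exist (d k : ℕ) (hd : 1 ≤ d) (hk : 1 ≤ k) :
    ∃ c : Fin k → EuclideanSpace ℝ (Fin d),
      (Set.univ : Set (Fin k)).PairwiseDisjoint
        (fun i => closedBall (c i) ((16 * Real.sqrt d)⁻¹ * (k : ℝ) ^ (-(1 : ℝ) / d))) ∧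
      (∀ i, closedBall (c i) (2 * ((16 * Real.sqrt d)⁻¹ * (k : ℝ) ^ (-(1 : ℝ) / d)))
          ⊆ closedBall (0 : EuclideanSpace ℝ (Fin d)) 1) ∧
      (Set.univ : Set (Fin k)).PairwiseDisjoint
        (fun i => closedBall (c i) (2 * ((16 * Real.sqrt d)⁻¹ * (k : ℝ) ^ (-(1 : ℝ) / d)))) := by
  have hd0 : (0 : ℝ) < d := by exact_mod_cast hd
  have hsd : (1 : ℝ) ≤ Real.sqrt d := by
    rw [show (1:ℝ) = Real.sqrt 1 by simp]
    exact Real.sqrt_le_sqrt (by exact_mod_cast hd)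
  have hsd0 : (0 : ℝ) < Real.sqrt d := lt_of_lt_of_le one_pos hsd
  set t : ℝ := (k : ℝ) ^ ((1 : ℝ) / d) with ht_def
  have ht1 : (1 : ℝ) ≤ t := Real.one_le_rpow (by exact_mod_cast hk) (by positivity)
  have ht0 : (0 : ℝ) < t := lt_of_lt_of_le one_pos ht1
  set m : ℕ := ⌈t⌉₊ with hm_def
  have hm1 : 1 ≤ m := Nat.one_le_ceil_iff.2 ht0
  have htm : t ≤ m := Nat.le_ceil t
  have hm4t : (m : ℝ) < 4 * t := by
    have := Nat.ceil_lt_add_one (le_of_lt ht0)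
    calc (m : ℝ) < t + 1 := this
      _ ≤ 4 * t := by linarith
  have hm0 : (0 : ℝ) < m := by exact_mod_cast hm1
  -- k ≤ m ^ d
  have hkm : k ≤ m ^ d := by
    have hk' : (k : ℝ) = t ^ d := by
      rw [ht_def, ← Real.rpow_natCast _ d, ← Real.rpow_mul (by positivity)]
      rw [one_div_mul_cancel (ne_of_gt hd0), Real.rpow_one]
    have : (k : ℝ) ≤ (m : ℝ) ^ d := by
      rw [hk']; exact pow_le_pow_left₀ (le_of_lt ht0) htm d
    exact_mod_cast this
  obtain ⟨e⟩ : Nonempty (Fin k ↪ (Fin d → Fin m)) := by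
    apply Function.Embedding.nonempty_of_card_le
    simpa using hkm
  -- radius and grid spacing
  set r : ℝ := (16 * Real.sqrt d)⁻¹ * (k : ℝ) ^ (-(1 : ℝ) / d) with hr_def
  have hr_eq : r = (16 * Real.sqrt d * t)⁻¹ := by
    rw [hr_def, neg_div, Real.rpow_neg (by positivity), ← ht_def, mul_inv, mul_inv]
    ring
  have hr0 : 0 < r := by rw [hr_eq]; positivity
  set s : ℝ := ((m : ℝ) * Real.sqrt d)⁻¹ with hs_def
  have hs0 : 0 < s := by rw [hs_def]; positivity
  have h4rs : 4 * r < s := by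
    have h4r : 4 * r = (4 * Real.sqrt d * t)⁻¹ := by
      rw [hr_eq]; field_simp; ring
    rw [h4r, hs_def]
    apply inv_strictAnti₀ (by positivity)
    calc (m : ℝ) * Real.sqrt d < 4 * t * Real.sqrt d := by
          apply mul_lt_mul_of_pos_right hm4t hsd0
      _ = 4 * Real.sqrt d * t := by ring
  set h : ℝ := (2 * Real.sqrt d)⁻¹ with hh_def
  have hh0 : 0 < h := by positivity
  have hms : (m : ℝ) * s = 2 * h := by
    rw [hs_def, hh_def]; field_simp
  -- centers
  set c : Fin k → EuclideanSpace ℝ (Fin d) := fun i =>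
    (WithLp.equiv 2 (Fin d → ℝ)).symm fun j => -h + (((e i j : ℕ) : ℝ) + 1/2) * s with hc_def
  have hcoord : ∀ i j, c i j = -h + (((e i j : ℕ) : ℝ) + 1/2) * s := by
    intro i j; rw [hc_def]; simp
  -- coordinate bound
  have hcoord_abs : ∀ i j, |c i j| ≤ h := by
    intro i j
    rw [hcoord]
    have hv0 : (0 : ℝ) ≤ ((e i j : ℕ) : ℝ) := by positivity
    have hv1 : ((e i j : ℕ) : ℝ) + 1 ≤ m := by exact_mod_cast (e i j).2
    rw [abs_le]
    constructor
    · nlinarith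
    · nlinarith
  -- norm bound on centers
  have hnorm : ∀ i, ‖c i‖ ≤ 1 / 2 := by
    intro i
    rw [EuclideanSpace.norm_eq]
    have hsum : ∑ j, ‖c i j‖ ^ 2 ≤ ∑ _j : Fin d, h ^ 2 := by
      apply Finset.sum_le_sum
      intro j _
      rw [Real.norm_eq_abs]
      exact pow_le_pow_left₀ (abs_nonneg _) (hcoord_abs i j) 2
    calc Real.sqrt (∑ j, ‖c i j‖ ^ 2) ≤ Real.sqrt (∑ _j : Fin d, h ^ 2) :=
          Real.sqrt_le_sqrt hsum
      _ = Real.sqrt ((d : ℝ) * h ^ 2) := by rw [Finset.sum_const]; simp [mul_comm]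
      _ = Real.sqrt d * h := by
          rw [Real.sqrt_mul (le_of_lt (lt_of_lt_of_le zero_lt_one (by exact_mod_cast hd)))]
          rw [Real.sqrt_sq (le_of_lt hh0)]
      _ = 1 / 2 := by rw [hh_def]; field_simp
  -- distance lower bound
  have hdist : ∀ i i' : Fin k, i ≠ i' → s ≤ dist (c i) (c i') := by
    intro i i' hne
    have hne' : e i ≠ e i' := fun hc => hne (e.injective hc)
    obtain ⟨j, hj⟩ := Function.ne_iff.mp hne'
    have hj' : (e i j : ℕ) ≠ (e i' j : ℕ) := fun hc => hj (Fin.ext hc)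
    have key : s ≤ dist (c i j) (c i' j) := by
      rw [Real.dist_eq, hcoord, hcoord]
      have h1 : (1 : ℝ) ≤ |((e i j : ℕ) : ℝ) - ((e i' j : ℕ) : ℝ)| := one_le_abs_sub_of_ne hj'
      calc s = 1 * s := (one_mul s).symm
        _ ≤ |((e i j : ℕ) : ℝ) - ((e i' j : ℕ) : ℝ)| * s :=
            mul_le_mul_of_nonneg_right h1 (le_of_lt hs0)
        _ = |(((e i j : ℕ) : ℝ) - ((e i' j : ℕ) : ℝ)) * s| := by
            rw [abs_mul, abs_of_pos hs0]
        _ = |-h + (((e i j : ℕ) : ℝ) + 1/2) * s - (-h + (((e i' j : ℕ) : ℝ) + 1/2) * s)| := by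
            ring_nf
    rw [EuclideanSpace.dist_eq]
    have hterm : dist (c i j) (c i' j) ^ 2 ≤ ∑ l, dist (c i l) (c i' l) ^ 2 :=
      Finset.single_le_sum (f := fun l => dist (c i l) (c i' l) ^ 2)
        (fun l _ => sq_nonneg _) (Finset.mem_univ j)
    calc s ≤ dist (c i j) (c i' j) := key
      _ = Real.sqrt (dist (c i j) (c i' j) ^ 2) := (Real.sqrt_sq dist_nonneg).symm
      _ ≤ Real.sqrt (∑ l, dist (c i l) (c i' l) ^ 2) := Real.sqrt_le_sqrt hterm
  refine ⟨c, ?_, ?_, ?_⟩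
  · intro i _ i' _ hne
    apply closedBall_disjoint_closedBall
    calc r + r < 4 * r := by linarith
      _ < s := h4rs
      _ ≤ dist (c i) (c i') := hdist i i' hne
  · intro i x hx
    rw [mem_closedBall] at hx ⊢
    have h2r : 2 * r ≤ 1 / 2 := by
      have h16 : (4 : ℝ) ≤ 16 * Real.sqrt d * t := by nlinarith
      have hinv : (16 * Real.sqrt d * t)⁻¹ ≤ (4 : ℝ)⁻¹ :=
        inv_anti₀ (by norm_num) h16
      rw [hr_eq]
      linarith
    calc dist x 0 ≤ dist x (c i) + dist (c i) 0 := dist_triangle _ _ _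
      _ ≤ 2 * r + 1 / 2 := by
          apply add_le_add hx
          rw [dist_zero_right]; exact hnorm i
      _ ≤ 1 := by linarith
  · intro i _ i' _ hne
    apply closedBall_disjoint_closedBall
    calc 2 * r + 2 * r = 4 * r := by ring
      _ < s := h4rs
      _ ≤ dist (c i) (c i') := hdist i i' hne
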